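/- Let I=⟨A,∅,R,R?⟩ be an AtIAF, S⊆A a set of arguments such that S is not stable-co with respect to I, and r=(a,b)∈R∪R? an attack with b∉S and (b,b)∉R. Then there exists a completion F of I such that {b}⁻_F∖S⁺_F={a} and S∈co(F) if and only if OutRel(I,S,r)=true. -/
import Mathlib


universe u

/-- An abstract argumentation framework: a set of arguments with an attack relation. -/
structure AF (α : Type u) where
  args : Set α
  att : Set (α × α)

namespace AF

variable {α : Type u}

/-- `S⁺_F`: arguments attacked by `S`. -/
def plusSet (F : AF α) (S : Set α) : Set α := {a | a ∈ F.args ∧ ∃ b ∈ S, (b, a) ∈ F.att}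

/-- `S⁻_F`: arguments attacking `S`. -/
def minusSet (F : AF α) (S : Set α) : Set α := {a | a ∈ F.args ∧ ∃ b ∈ S, (a, b) ∈ F.att}

/-- `S` is conflict-free in `F`. -/
def confFree (F : AF α) (S : Set α) : Prop := S ∩ F.plusSet S = ∅

/-- `S` defends `a` in `F`: every attacker of `a` is attacked by `S`. -/
def defends (F : AF α) (S : Set α) (a : α) : Prop := ∀ b, (b, a) ∈ F.att → b ∈ F.plusSet S

/-- The characteristic function `Γ_F(S)`: arguments defended by `S`. -/
def Γ (F : AF α) (S : Set α) : Set α := {a | a ∈ F.args ∧ F.defends S a}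

/-- Admissible: conflict-free and self-defending. -/
def isAd (F : AF α) (S : Set α) : Prop := S ⊆ F.args ∧ F.confFree S ∧ S ⊆ F.Γ S

/-- Stable: conflict-free and attacking exactly the outside. -/
def isSt (F : AF α) (S : Set α) : Prop := S ⊆ F.args ∧ F.confFree S ∧ F.plusSet S = F.args \ S

/-- Complete: admissible and containing all defended arguments. -/
def isCo (F : AF α) (S : Set α) : Prop := F.isAd S ∧ F.Γ S ⊆ S

/-- Grounded: ⊆-minimal complete. -/
def isGr (F : AF α) (S : Set α) : Prop := F.isCo S ∧ ∀ T, F.isCo T → T ⊆ S → T = S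

/-- Preferred: ⊆-maximal admissible. -/
def isPr (F : AF α) (S : Set α) : Prop := F.isAd S ∧ ∀ T, F.isAd T → S ⊆ T → S = T

end AF

/-- The five common semantics. -/
inductive Sem : Type
  | ad | st | co | gr | pr
deriving DecidableEq

/-- `S` is a `σ`-extension of `F`. -/
def extOf {α : Type u} : Sem → AF α → Set α → Prop
  | .ad => AF.isAd
  | .st => AF.isSt
  | .co => AF.isCo
  | .gr => AF.isGr
  | .pr => AF.isPr

/-- An incomplete argumentation framework (data part). -/
structure IAF (α : Type u) where
  A : Set α
  Aq : Set α
  R : Set (α × α)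
  Rq : Set (α × α)

namespace IAF

variable {α : Type u}

/-- Well-formedness: `A`,`A?` disjoint; `R`,`R?` disjoint subsets of `(A∪A?)×(A∪A?)`. -/
def WF (I : IAF α) : Prop :=
  Disjoint I.A I.Aq ∧ Disjoint I.R I.Rq ∧
  I.R ⊆ (I.A ∪ I.Aq) ×ˢ (I.A ∪ I.Aq) ∧
  I.Rq ⊆ (I.A ∪ I.Aq) ×ˢ (I.A ∪ I.Aq)

/-- `cert(I)`: the AF projected on the certain part. -/
def cert (I : IAF α) : AF α := ⟨I.A, I.R ∩ I.A ×ˢ I.A⟩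

/-- `I'` is a partial completion of `I`. -/
def PartOf (I' I : IAF α) : Prop :=
  I'.WF ∧ I.A ⊆ I'.A ∧ I'.A ⊆ I.A ∪ I.Aq ∧
  I.R ∩ (I'.A ∪ I'.Aq) ×ˢ (I'.A ∪ I'.Aq) ⊆ I'.R ∧
  I'.R ⊆ I.R ∪ I.Rq ∧ I'.Aq ⊆ I.Aq ∧ I'.Rq ⊆ I.Rq

/-- `F` is a completion of `I`. -/
def IsCompletion (I : IAF α) (F : AF α) : Prop := ∃ I' : IAF α, I'.PartOf I ∧ F = I'.cert

/-- `I + R₀` for a set of uncertain attacks. -/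
def addR (I : IAF α) (R0 : Set (α × α)) : IAF α := ⟨I.A, I.Aq, I.R ∪ R0, I.Rq \ R0⟩

/-- `I − R₀` for a set of uncertain attacks. -/
def subR (I : IAF α) (R0 : Set (α × α)) : IAF α := ⟨I.A, I.Aq, I.R, I.Rq \ R0⟩

/-- `I + A₀` for a set of uncertain arguments. -/
def addA (I : IAF α) (A0 : Set α) : IAF α := ⟨I.A ∪ A0, I.Aq \ A0, I.R, I.Rq⟩

/-- `I − A₀` for a set of uncertain arguments. -/
def subA (I : IAF α) (A0 : Set α) : IAF α :=
  ⟨I.A, I.Aq \ A0,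
   I.R \ {p | p ∈ I.R ∪ I.Rq ∧ (p.1 ∈ A0 ∨ p.2 ∈ A0)},
   I.Rq \ {p | p ∈ I.R ∪ I.Rq ∧ (p.1 ∈ A0 ∨ p.2 ∈ A0)}⟩

/-- `S⁺_I`. -/
def plusI (I : IAF α) (S : Set α) : Set α := {a | a ∈ I.A ∪ I.Aq ∧ ∃ b ∈ S, (b, a) ∈ I.R}

/-- `S⁻_I`. -/
def minusI (I : IAF α) (S : Set α) : Set α := {a | a ∈ I.A ∪ I.Aq ∧ ∃ b ∈ S, (a, b) ∈ I.R}

/-- `S^∼_I`. -/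
def simI (I : IAF α) (S : Set α) : Set α :=
  {a | a ∈ I.A ∪ I.Aq ∧ ∀ b ∈ S, (b, a) ∉ I.R ∪ I.Rq}

end IAF

/-- An element of an IAF: either an argument or an attack. -/
inductive Elem (α : Type u) : Type u
  | arg (a : α)
  | att (r : α × α)

/-- `e` is an uncertain element of `I`, i.e. `e ∈ A? ∪ R?`. -/
def IAF.isUnc {α : Type u} (I : IAF α) : Elem α → Prop
  | .arg a => a ∈ I.Aq
  | .att r => r ∈ I.Rq

/-- `I + {e}`. -/
def IAF.addE {α : Type u} (I : IAF α) : Elem α → IAF α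
  | .arg a => I.addA {a}
  | .att r => I.addR {r}

/-- `I − {e}`. -/
def IAF.subE {α : Type u} (I : IAF α) : Elem α → IAF α
  | .arg a => I.subA {a}
  | .att r => I.subR {r}

/-- `e` is the unique uncertain element of `I`, i.e. `A? ∪ R? = {e}`. -/
def onlyUnc {α : Type u} (I : IAF α) : Elem α → Prop
  | .arg a => I.Aq = {a} ∧ I.Rq = ∅
  | .att r => I.Aq = ∅ ∧ I.Rq = {r}

/-- A verification status: a semantics together with true/false. -/
abbrev VStatus := Sem × Bool

/-- `S` has verification status `j` in the AF `F`. -/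
def hasStatus {α : Type u} (F : AF α) (S : Set α) (j : VStatus) : Prop :=
  cond j.2 (extOf j.1 F S) (¬ extOf j.1 F S)

/-- `S` is stable-`j` w.r.t. `I`. -/
def IAF.stableJ {α : Type u} (I : IAF α) (S : Set α) (j : VStatus) : Prop :=
  ∀ F, I.IsCompletion F → hasStatus F S j

/-- `S` is stable-`σ` w.r.t. `I`. -/
def IAF.stableSem {α : Type u} (I : IAF α) (S : Set α) (σ : Sem) : Prop :=
  I.stableJ S (σ, true) ∨ I.stableJ S (σ, false)

/-- `RE⁺(I,S,j)`: uncertain elements whose addition is `j`-relevant for `S` w.r.t. `I`. -/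
def REplus {α : Type u} (I : IAF α) (S : Set α) (j : VStatus) : Set (Elem α) :=
  {e | I.isUnc e ∧ ∃ I' : IAF α, I'.PartOf I ∧ onlyUnc I' e ∧
    hasStatus (I'.addE e).cert S j ∧ ¬ hasStatus (I'.subE e).cert S j}

/-- `RE⁻(I,S,j)`: uncertain elements whose removal is `j`-relevant for `S` w.r.t. `I`. -/
def REminus {α : Type u} (I : IAF α) (S : Set α) (j : VStatus) : Set (Elem α) :=
  {e | I.isUnc e ∧ ∃ I' : IAF α, I'.PartOf I ∧ onlyUnc I' e ∧
    hasStatus (I'.subE e).cert S j ∧ ¬ hasStatus (I'.addE e).cert S j}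

/-- `e` is `σ`-irrelevant for `S` w.r.t. `I`. -/
def irrelevant {α : Type u} (I : IAF α) (S : Set α) (σ : Sem) (e : Elem α) : Prop :=
  e ∉ REplus I S (σ, true) ∧ e ∉ REminus I S (σ, true) ∧
  e ∉ REplus I S (σ, false) ∧ e ∉ REminus I S (σ, false)

/-- `PosVer_σ(I,S) = true`. -/
def PosVer {α : Type u} (σ : Sem) (I : IAF α) (S : Set α) : Prop :=
  ∃ F, I.IsCompletion F ∧ extOf σ F S

/-- `NecVer_σ(I,S) = true`. -/
def NecVer {α : Type u} (σ : Sem) (I : IAF α) (S : Set α) : Prop :=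
  ∀ F, I.IsCompletion F → extOf σ F S

/-- `SRE⁺(I,S,j)`: uncertain elements whose addition is strongly `j`-relevant. -/
def SREplus {α : Type u} (I : IAF α) (S : Set α) (j : VStatus) : Set (Elem α) :=
  {e | I.isUnc e ∧ ∀ I' : IAF α, I'.PartOf (I.subE e) → ¬ I'.stableJ S j}

/-- `SRE⁻(I,S,j)`: uncertain elements whose removal is strongly `j`-relevant. -/
def SREminus {α : Type u} (I : IAF α) (S : Set α) (j : VStatus) : Set (Elem α) :=
  {e | I.isUnc e ∧ ∀ I' : IAF α, I'.PartOf (I.addE e) → ¬ I'.stableJ S j}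

/-- The `OutRel(I,S,(a,b))` predicate. -/
def OutRel {α : Type u} (I : IAF α) (S : Set α) (r : α × α) : Prop :=
  (I.minusI {r.2} \ {r.1}) ∩ I.simI S = ∅ ∧
  PosVer Sem.co
    ((I.addR {p | p ∈ I.Rq ∧ p.1 ∈ S ∧ p.2 ∈ I.minusI {r.2} \ {r.1}}).subR
      {p | p ∈ I.Rq ∧ p.1 ≠ r.1 ∧ p.2 = r.2}) S



section Helpers
variable {α : Type u}

lemma IAF.atR_sub (I : IAF α) (hWF : I.WF) (hAt : I.Aq = ∅) :
    I.R ⊆ I.A ×ˢ I.A := by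
  have h := hWF.2.2.1
  rwa [hAt, Set.union_empty] at h

lemma IAF.atRq_sub (I : IAF α) (hWF : I.WF) (hAt : I.Aq = ∅) :
    I.Rq ⊆ I.A ×ˢ I.A := by
  have h := hWF.2.2.2
  rwa [hAt, Set.union_empty] at h

lemma IAF.atCompletion_iff (I : IAF α) (hWF : I.WF) (hAt : I.Aq = ∅) (F : AF α) :
    I.IsCompletion F ↔ F.args = I.A ∧ I.R ⊆ F.att ∧ F.att ⊆ I.R ∪ I.Rq := by
  constructor
  · rintro ⟨I', ⟨hWF', hA1, hA2, hR1, hR2, hAq, hRq⟩, rfl⟩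
    have hAeq : I'.A = I.A := by
      refine subset_antisymm ?_ hA1
      rw [hAt, Set.union_empty] at hA2; exact hA2
    refine ⟨hAeq, ?_, ?_⟩
    · intro p hp
      have hpA : p ∈ I.A ×ˢ I.A := I.atR_sub hWF hAt hp
      have hp' : p ∈ I'.R := by
        refine hR1 ⟨hp, ?_⟩
        have h1 : I'.A ⊆ I'.A ∪ I'.Aq := Set.subset_union_left
        exact Set.mem_prod.mpr ⟨h1 (hAeq ▸ (Set.mem_prod.mp hpA).1),
          h1 (hAeq ▸ (Set.mem_prod.mp hpA).2)⟩
      exact ⟨hp', Set.mem_prod.mpr ⟨hAeq ▸ (Set.mem_prod.mp hpA).1,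
        hAeq ▸ (Set.mem_prod.mp hpA).2⟩⟩
    · exact fun p hp => hR2 hp.1
  · rintro ⟨hargs, hlo, hhi⟩
    have hattA : F.att ⊆ I.A ×ˢ I.A := by
      intro p hp
      rcases hhi hp with h | h
      · exact I.atR_sub hWF hAt h
      · exact I.atRq_sub hWF hAt h
    refine ⟨⟨I.A, ∅, F.att, ∅⟩, ⟨⟨?_, ?_, ?_, ?_⟩, ?_, ?_, ?_, ?_, ?_, ?_⟩, ?_⟩
    · exact Set.disjoint_empty _
    · exact Set.disjoint_empty _
    · simpa using hattA
    · simp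
    · exact subset_rfl
    · simp
    · intro p hp; exact hlo hp.1
    · exact hhi
    · simp
    · simp
    · show F = AF.mk I.A (F.att ∩ I.A ×ˢ I.A)
      have h2 : F.att ∩ I.A ×ˢ I.A = F.att := Set.inter_eq_left.mpr hattA
      cases F
      simp only [AF.mk.injEq] at *
      exact ⟨hargs, h2.symm⟩

end Helpers

/-- soundness and completeness of the `OutRel` algorithm. -/
theorem stmt6 {α : Type u} (I : IAF α) (S : Set α) (r : α × α)
    (hWF : I.WF) (hAt : I.Aq = ∅) (hS : S ⊆ I.A)
    (hns : ¬ I.stableSem S Sem.co)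
    (hr : r ∈ I.R ∪ I.Rq) (hb : r.2 ∉ S) (hbb : (r.2, r.2) ∉ I.R) :
    (∃ F : AF α, I.IsCompletion F ∧ F.minusSet {r.2} \ F.plusSet S = {r.1} ∧
        extOf Sem.co F S)
      ↔ OutRel I S r := by
  have hA2 : I.A ∪ I.Aq = I.A := by rw [hAt, Set.union_empty]
  have hRsub := I.atR_sub hWF hAt
  have hRqsub := I.atRq_sub hWF hAt
  have hDisj := Set.disjoint_left.mp hWF.2.1
  have haA : r.1 ∈ I.A := by
    rcases hr with h | h
    · exact (Set.mem_prod.mp (hRsub h)).1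
    · exact (Set.mem_prod.mp (hRqsub h)).1
  have hbA : r.2 ∈ I.A := by
    rcases hr with h | h
    · exact (Set.mem_prod.mp (hRsub h)).2
    · exact (Set.mem_prod.mp (hRqsub h)).2
  let Add : Set (α × α) := {p | p ∈ I.Rq ∧ p.1 ∈ S ∧ p.2 ∈ I.minusI {r.2} \ {r.1}}
  let Del : Set (α × α) := {p | p ∈ I.Rq ∧ p.1 ≠ r.1 ∧ p.2 = r.2}
  have hI1WF : ((I.addR Add).subR Del).WF := by
    refine ⟨hWF.1, ?_, ?_, ?_⟩
    · rw [Set.disjoint_left]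
      rintro p (hp | hp)
      · exact fun hd => (hDisj hp) hd.1.1
      · exact fun hd => hd.1.2 hp
    · rintro p (hp | hp)
      · exact hWF.2.2.1 hp
      · exact hWF.2.2.2 hp.1
    · intro p hp; exact hWF.2.2.2 hp.1.1
  have hI1compl := ((I.addR Add).subR Del).atCompletion_iff hI1WF hAt
  constructor
  · -- forward: existence of completion implies OutRel
    rintro ⟨F, hcompF, heq, hcoF⟩
    obtain ⟨hargs, hlo, hhi⟩ := (I.atCompletion_iff hWF hAt F).mp hcompF
    have hcoF' : F.isCo S := hcoF
    have h1 : (I.minusI {r.2} \ {r.1}) ∩ I.simI S = ∅ := by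
      rw [Set.eq_empty_iff_forall_notMem]
      rintro u ⟨⟨⟨huA, c, hc, hR⟩, hne⟩, huSim⟩
      rw [Set.mem_singleton_iff] at hc; subst hc
      rw [hA2] at huA
      have hupF : u ∉ F.plusSet S := by
        rintro ⟨-, s, hs, hatt⟩
        exact huSim.2 s hs (hhi hatt)
      have hmem : u ∈ F.minusSet {r.2} \ F.plusSet S :=
        ⟨⟨(show u ∈ F.args by rw [hargs]; exact huA), r.2, rfl, hlo hR⟩, hupF⟩
      rw [heq] at hmem
      exact hne hmem
    have ha_att : (r.1, r.2) ∈ F.att ∧ r.1 ∉ F.plusSet S := by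
      have hm : r.1 ∈ F.minusSet {r.2} \ F.plusSet S := by rw [heq]; exact rfl
      obtain ⟨⟨-, c, hc, hatt⟩, hnp⟩ := hm
      rw [Set.mem_singleton_iff] at hc; subst hc
      exact ⟨hatt, hnp⟩
    have hAddT : ∀ p ∈ Add, p.2 ∈ F.plusSet S := by
      rintro p ⟨hpRq, hpS, ⟨⟨hpA, c, hc, hR⟩, hne⟩⟩
      rw [Set.mem_singleton_iff] at hc; subst hc
      rw [hA2] at hpA
      by_contra hnp
      have hmem : p.2 ∈ F.minusSet {r.2} \ F.plusSet S :=
        ⟨⟨(show p.2 ∈ F.args by rw [hargs]; exact hpA), r.2, rfl, hlo hR⟩, hnp⟩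
      rw [heq] at hmem
      exact hne hmem
    have hplus : AF.plusSet ⟨I.A, (F.att \ Del) ∪ Add⟩ S = F.plusSet S := by
      ext x
      constructor
      · rintro ⟨hx, s, hs, hatt⟩
        rcases hatt with ⟨hatt, -⟩ | hatt
        · exact ⟨(show x ∈ F.args by rw [hargs]; exact hx), s, hs, hatt⟩
        · exact hAddT (s, x) hatt
      · rintro ⟨hx, s, hs, hatt⟩
        rw [hargs] at hx
        refine ⟨hx, s, hs, Or.inl ⟨hatt, ?_⟩⟩
        rintro ⟨hRq, hne, heq2⟩
        have hx2 : x = r.2 := heq2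
        subst hx2
        have hsp : s ∉ F.plusSet S := fun hsp =>
          Set.eq_empty_iff_forall_notMem.mp hcoF'.1.2.1 s ⟨hs, hsp⟩
        have hmem : s ∈ F.minusSet {r.2} \ F.plusSet S :=
          ⟨⟨hcoF'.1.1 hs, r.2, rfl, hatt⟩, hsp⟩
        rw [heq] at hmem
        exact hne hmem
    have hcomp1 : ((I.addR Add).subR Del).IsCompletion ⟨I.A, (F.att \ Del) ∪ Add⟩ := by
      rw [hI1compl]
      refine ⟨rfl, ?_, ?_⟩
      · rintro p (hp | hp)
        · exact Or.inl ⟨hlo hp, fun hd => (hDisj hp) hd.1⟩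
        · exact Or.inr hp
      · rintro p (⟨hp, hpd⟩ | hp)
        · rcases hhi hp with h | h
          · exact Or.inl (Or.inl h)
          · by_cases hA' : p ∈ Add
            · exact Or.inl (Or.inr hA')
            · exact Or.inr ⟨⟨h, hA'⟩, hpd⟩
        · exact Or.inl (Or.inr hp)
    have hco1 : AF.isCo ⟨I.A, (F.att \ Del) ∪ Add⟩ S := by
      refine ⟨⟨?_, ?_, ?_⟩, ?_⟩
      · intro s hs
        have := hcoF'.1.1 hs; rwa [hargs] at this
      · show S ∩ AF.plusSet ⟨I.A, (F.att \ Del) ∪ Add⟩ S = ∅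
        rw [hplus]; exact hcoF'.1.2.1
      · intro s hs
        refine ⟨(show s ∈ I.A by have := hcoF'.1.1 hs; rwa [hargs] at this), ?_⟩
        intro x hx
        rcases hx with ⟨hx, -⟩ | hx
        · show x ∈ AF.plusSet ⟨I.A, (F.att \ Del) ∪ Add⟩ S
          rw [hplus]
          exact (hcoF'.1.2.2 hs).2 x hx
        · exact absurd (hAddT (x, s) hx)
            (fun h => Set.eq_empty_iff_forall_notMem.mp hcoF'.1.2.1 s ⟨hs, h⟩)
      · rintro c ⟨hcA, hdef⟩
        have hdefF : F.defends S c := by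
          intro x hx
          by_cases hxd : (x, c) ∈ Del
          · obtain ⟨hxRq, hxne, hxc⟩ := hxd
            have hc2 : c = r.2 := hxc
            subst hc2
            have h1att : (r.1, r.2) ∈ (F.att \ Del) ∪ Add :=
              Or.inl ⟨ha_att.1, fun hd => hd.2.1 rfl⟩
            have hres := hdef r.1 h1att
            rw [hplus] at hres
            exact absurd hres ha_att.2
          · have hres := hdef x (Or.inl ⟨hx, hxd⟩)
            rwa [hplus] at hres
        exact hcoF'.2 ⟨(show c ∈ F.args by rw [hargs]; exact hcA), hdefF⟩
    exact ⟨h1, ⟨⟨I.A, (F.att \ Del) ∪ Add⟩, hcomp1, hco1⟩⟩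
  · -- backward: OutRel implies existence of completion
    rintro ⟨h1, F₁, hcomp1, hco1⟩
    obtain ⟨hargs1, hlo1, hhi1⟩ := (hI1compl F₁).mp hcomp1
    have hco1' : F₁.isCo S := hco1
    have hcompI : I.IsCompletion F₁ := by
      rw [I.atCompletion_iff hWF hAt F₁]
      refine ⟨hargs1, fun p hp => hlo1 (Or.inl hp), fun p hp => ?_⟩
      rcases hhi1 hp with (h | h) | h
      · exact Or.inl h
      · exact Or.inr h.1
      · exact Or.inr h.1.1
    have K : ∀ u, (u, r.2) ∈ F₁.att → u ∉ F₁.plusSet S → u = r.1 := by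
      intro u hu hnp
      rcases hhi1 hu with (h | h) | h
      · -- (u, r.2) ∈ I.R
        by_contra hne
        have huA : u ∈ I.A := (Set.mem_prod.mp (hRsub h)).1
        have humin : u ∈ I.minusI {r.2} \ {r.1} :=
          ⟨⟨(by rw [hA2]; exact huA), r.2, rfl, h⟩, hne⟩
        have hex : ∃ s ∈ S, (s, u) ∈ I.R ∪ I.Rq := by
          by_contra hcon
          push_neg at hcon
          exact Set.eq_empty_iff_forall_notMem.mp h1 u
            ⟨humin, ⟨(by rw [hA2]; exact huA), fun s hs => hcon s hs⟩⟩
        obtain ⟨s, hs, hsu⟩ := hex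
        rcases hsu with hsu | hsu
        · exact hnp ⟨(show u ∈ F₁.args by rw [hargs1]; exact huA), s, hs,
            hlo1 (Or.inl hsu)⟩
        · exact hnp ⟨(show u ∈ F₁.args by rw [hargs1]; exact huA), s, hs,
            hlo1 (Or.inr ⟨hsu, hs, humin⟩)⟩
      · -- (u, r.2) ∈ Add : impossible since (r.2, r.2) ∉ I.R
        obtain ⟨-, -, ⟨⟨-, c, hc, hcc⟩, -⟩⟩ := h
        rw [Set.mem_singleton_iff] at hc
        subst hc
        exact absurd hcc hbb
      · -- (u, r.2) ∈ (Rq \ Add) \ Del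
        by_contra hne
        exact h.2 ⟨h.1.1, hne, rfl⟩
    have hnb : ¬ F₁.defends S r.2 := by
      intro hd
      exact hb (hco1'.2 ⟨(show r.2 ∈ F₁.args by rw [hargs1]; exact hbA), hd⟩)
    unfold AF.defends at hnb
    push_neg at hnb
    obtain ⟨u, hu, hnp⟩ := hnb
    have hua : u = r.1 := K u hu hnp
    refine ⟨F₁, hcompI, ?_, hco1⟩
    ext x
    simp only [Set.mem_diff, Set.mem_singleton_iff]
    constructor
    · rintro ⟨⟨hxA, c, hc, hxc⟩, hxp⟩
      rw [Set.mem_singleton_iff] at hc; subst hc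
      exact K x hxc hxp
    · rintro rfl
      exact ⟨⟨(show r.1 ∈ F₁.args by rw [hargs1]; exact haA), r.2, rfl, hua ▸ hu⟩,
        hua ▸ hnp⟩
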